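/- arXiv:2410.22498 — 5 statements merged into one kernel-verified Lean document; each statement's English description precedes it below -/
import Mathlib

section
/- Let b ∈ (0,1) and let (B_k)_{k≥0} be i.i.d. real random variables with E[max(0, ln|B_0|)] < ∞. Then the series Σ_{k=0}^∞ b^k B_k converges almost surely. -/
/-!
Identically distributed copies of an integrable variable satisfy `∑ ℙ(|X_k| > ε k) < ∞`, so by
Borel–Cantelli `log⁺ |B_k| ≤ ε k` for all large `k`, almost surely. Taking `ε < -log b`, the terms
`b^k B_k` are then eventually dominated by the geometric sequence `(b e^ε)^k`.
-/

open MeasureTheory ProbabilityTheory Filter Real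

theorem Real.abs_le_exp_posLog (x : ℝ) : |x| ≤ exp (log⁺ x) := by
  rw [← posLog_abs, posLog_eq_log_max_one (abs_nonneg x), exp_log (by positivity)]
  exact le_max_right 1 |x|

theorem summable_pow_mul_of_eventually_posLog_le {b ε : ℝ} (hb : 0 ≤ b) (hbε : b * exp ε < 1)
    {x : ℕ → ℝ} (hx : ∀ᶠ k in atTop, log⁺ (x k) ≤ ε * k) :
    Summable fun k => b ^ k * x k := by
  refine Summable.of_norm_bounded_eventually
    (summable_geometric_of_lt_one (by positivity) hbε) ?_
  rw [Nat.cofinite_eq_atTop]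
  filter_upwards [hx] with k hk
  calc ‖b ^ k * x k‖ = b ^ k * |x k| := by
        rw [norm_mul, norm_pow, Real.norm_of_nonneg hb, Real.norm_eq_abs]
    _ ≤ b ^ k * exp (ε * k) := by
        gcongr
        exact (abs_le_exp_posLog _).trans (exp_le_exp.2 hk)
    _ = (b * exp ε) ^ k := by rw [mul_pow, ← exp_nat_mul, mul_comm (k : ℝ)]

namespace ProbabilityTheory

variable {Ω : Type*} [MeasureSpace Ω] [IsProbabilityMeasure (ℙ : Measure Ω)]

theorem ae_eventually_le_mul_of_identDistrib {X : ℕ → Ω → ℝ}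
    (hident : ∀ k, IdentDistrib (X k) (X 0)) (hint : Integrable (X 0)) {c : ℝ} (hc : 0 < c) :
    ∀ᵐ ω, ∀ᶠ k in atTop, X k ω ≤ c * k := by
  have hprob : ∀ k : ℕ, ℙ {ω | c * k < |X k ω|} = ℙ {ω | c⁻¹ * |X 0 ω| ∈ Set.Ioi (k : ℝ)} := by
    intro k
    simp only [Set.mem_Ioi, lt_inv_mul_iff₀ hc]
    exact (hident k).measure_mem_eq (s := {y | c * k < |y|})
      (measurableSet_lt measurable_const measurable_abs)
  have hsum : ∑' k : ℕ, ℙ {ω | c * k < |X k ω|} ≠ ⊤ := by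
    simp_rw [hprob]
    exact (tsum_prob_mem_Ioi_lt_top (hint.abs.const_mul _)
      fun ω => mul_nonneg (inv_nonneg.2 hc.le) (abs_nonneg _)).ne
  filter_upwards [ae_eventually_notMem hsum] with ω hω
  filter_upwards [hω] with k hk
  exact (le_abs_self _).trans (not_lt.1 hk)

end ProbabilityTheory

theorem summable_geometric_iid_of_integrable_pos_log_general
    {Ω : Type*} [MeasureSpace Ω] [IsProbabilityMeasure (ℙ : Measure Ω)]
    (b : ℝ) (hb : b ∈ Set.Ioo (0 : ℝ) 1)
    (B : ℕ → Ω → ℝ) (hmeas : ∀ k, Measurable (B k))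
    (hident : ∀ k, Measure.map (B k) ℙ = Measure.map (B 0) ℙ)
    (hlog : Integrable (fun ω => max 0 (Real.log |B 0 ω|)) ℙ) :
    ∀ᵐ ω ∂ℙ, Summable (fun k => b ^ k * B k ω) := by
  obtain ⟨hb0, hb1⟩ := hb
  obtain ⟨ε, hε0, hεb⟩ := exists_between (neg_pos.2 (log_neg hb0 hb1))
  have hbε : b * exp ε < 1 := calc
    b * exp ε < b * exp (-log b) := by gcongr
    _ = 1 := by rw [exp_neg, exp_log hb0, mul_inv_cancel₀ hb0.ne']
  have hidentLog : ∀ k, IdentDistrib (fun ω => log⁺ (B k ω)) (fun ω => log⁺ (B 0 ω)) :=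
    fun k => (IdentDistrib.mk (hmeas k).aemeasurable (hmeas 0).aemeasurable (hident k)).comp
      continuous_posLog.measurable
  have hintLog : Integrable (fun ω => log⁺ (B 0 ω)) :=
    hlog.congr (.of_forall fun ω => posLog_abs (B 0 ω))
  filter_upwards [ae_eventually_le_mul_of_identDistrib hidentLog hintLog hε0] with ω hω
  exact summable_pow_mul_of_eventually_posLog_le hb0.le hbε hω

/-- Let `b ∈ (0,1)` and let `(B_k)_{k ≥ 0}` be i.i.d. real random variables with
`E[max(0, ln|B_0|)] < ∞`. Then the series `Σ_{k=0}^∞ b^k B_k` converges almost surely. -/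
theorem summable_geometric_iid_of_integrable_pos_log
    {Ω : Type*} [MeasureSpace Ω] [IsProbabilityMeasure (ℙ : Measure Ω)]
    (b : ℝ) (hb : b ∈ Set.Ioo (0 : ℝ) 1)
    (B : ℕ → Ω → ℝ) (hmeas : ∀ k, Measurable (B k))
    (hindep : iIndepFun B ℙ)
    (hident : ∀ k, Measure.map (B k) ℙ = Measure.map (B 0) ℙ)
    (hlog : Integrable (fun ω => max 0 (Real.log |B 0 ω|)) ℙ) :
    ∀ᵐ ω ∂ℙ, Summable (fun k => b ^ k * B k ω) :=
  summable_geometric_iid_of_integrable_pos_log_general b hb B hmeas hident hlog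
end

section
/- Let α, a, c be real constants, β ∈ (0,1), b ∈ (0,1), and let (Z, W) be a random vector in ℝ² whose law has a Lebesgue density that is strictly positive everywhere on ℝ². Fix (v, r) ∈ (0,∞) × ℝ and set V₁ = exp(α + β ln v + W), R₁ = a + b r + c V₁ + V₁ Z. Then for every Borel set A ⊆ (0,∞) × ℝ of positive Lebesgue measure, P((V₁, R₁) ∈ A) > 0. -/
/-!
For fixed `(v, r)` the pair `(V₁, R₁)` is the image of `(Z, W)` under the smooth map
`(z, w) ↦ (exp (κ + w), m + c exp (κ + w) + exp (κ + w) z)`, `κ = α + β log v`, `m = a + b r`,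
whose range is the whole half-plane `(0,∞) × ℝ`. A differentiable self-map of `ℝ²` sends null
sets to null sets, so a set of positive measure inside its range has a preimage of positive
measure, and that preimage is charged by the law of `(Z, W)` because its density is positive.
-/

open MeasureTheory ProbabilityTheory Set

theorem MeasureTheory.Measure.restrict_range_absolutelyContinuous_map_of_differentiable
    {E : Type*} [NormedAddCommGroup E] [NormedSpace ℝ E] [FiniteDimensional ℝ E]
    [MeasurableSpace E] [BorelSpace E] (μ : Measure E) [μ.IsAddHaarMeasure]
    {g : E → E} (hg : Differentiable ℝ g) :
    μ.restrict (range g) ≪ μ.map g := by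
  refine Measure.AbsolutelyContinuous.mk fun s hs hs0 => ?_
  rw [Measure.map_apply hg.continuous.measurable hs] at hs0
  rw [Measure.restrict_apply hs, ← image_preimage_eq_inter_range]
  exact addHaar_image_eq_zero_of_differentiableOn_of_addHaar_eq_zero μ hg.differentiableOn hs0

noncomputable def volReturnMap (κ m c : ℝ) (p : ℝ × ℝ) : ℝ × ℝ :=
  (Real.exp (κ + p.2), m + c * Real.exp (κ + p.2) + Real.exp (κ + p.2) * p.1)

theorem differentiable_volReturnMap (κ m c : ℝ) : Differentiable ℝ (volReturnMap κ m c) := by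
  unfold volReturnMap
  fun_prop

theorem Ioi_prod_univ_subset_range_volReturnMap (κ m c : ℝ) :
    Ioi 0 ×ˢ univ ⊆ range (volReturnMap κ m c) := by
  rintro ⟨u, y⟩ ⟨hu, -⟩
  have hu : 0 < u := hu
  refine ⟨((y - m - c * u) / u, Real.log u - κ), ?_⟩
  simp only [volReturnMap, add_sub_cancel, Real.exp_log hu, Prod.mk.injEq, true_and]
  field_simp
  ring

theorem pos_prob_of_pos_leb_two_dim_general
    {Ω : Type*} [MeasureSpace Ω]
    (α a c β b : ℝ)
    (Z W : Ω → ℝ) (hZW : Measurable fun ω => (Z ω, W ω))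
    (f : ℝ × ℝ → ℝ) (hf : Measurable f) (hfpos : ∀ x, 0 < f x)
    (hdens : Measure.map (fun ω => (Z ω, W ω)) ℙ
      = volume.withDensity fun x => ENNReal.ofReal (f x))
    (v r : ℝ) :
    ∀ A : Set (ℝ × ℝ), MeasurableSet A → A ⊆ Set.Ioi 0 ×ˢ Set.univ → 0 < volume A →
      0 < ℙ {ω | (Real.exp (α + β * Real.log v + W ω),
        a + b * r + c * Real.exp (α + β * Real.log v + W ω)
          + Real.exp (α + β * Real.log v + W ω) * Z ω) ∈ A} := by
  intro A hA hAsub hApos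
  set g := volReturnMap (α + β * Real.log v) (a + b * r) c
  set law := Measure.map (fun ω => (Z ω, W ω)) ℙ
  have hg : Differentiable ℝ g := differentiable_volReturnMap _ _ _
  have hvol_ac_law : volume ≪ law := by
    rw [hdens]
    exact withDensity_absolutelyContinuous' hf.ennreal_ofReal.aemeasurable
      (ae_of_all _ fun x => (ENNReal.ofReal_pos.mpr (hfpos x)).ne')
  have hac : volume.restrict (range g) ≪ law.map g :=
    (Measure.restrict_range_absolutelyContinuous_map_of_differentiable volume hg).trans
      (hvol_ac_law.map hg.continuous.measurable)
  have hpos := hac.pos_mono (t := A) <| by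
    rwa [Measure.restrict_eq_self _
      (hAsub.trans (Ioi_prod_univ_subset_range_volReturnMap _ _ _))]
  rwa [Measure.map_map hg.continuous.measurable hZW, Measure.map_apply
    (hg.continuous.measurable.comp hZW) hA] at hpos

/-- Let `α, a, c` be real constants, `β ∈ (0,1)`, `b ∈ (0,1)`, and let `(Z, W)` be a random
vector in `ℝ²` whose law has an everywhere strictly positive Lebesgue density. Fix
`(v, r) ∈ (0,∞) × ℝ` and set `V₁ = exp(α + β ln v + W)`, `R₁ = a + b r + c V₁ + V₁ Z`.
Then every Borel set `A ⊆ (0,∞) × ℝ` of positive Lebesgue measure satisfies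
`P((V₁, R₁) ∈ A) > 0`. -/
theorem pos_prob_of_pos_leb_two_dim
    {Ω : Type*} [MeasureSpace Ω] [IsProbabilityMeasure (ℙ : Measure Ω)]
    (α a c β b : ℝ) (hβ : β ∈ Set.Ioo (0 : ℝ) 1) (hb : b ∈ Set.Ioo (0 : ℝ) 1)
    (Z W : Ω → ℝ) (hZW : Measurable fun ω => (Z ω, W ω))
    (f : ℝ × ℝ → ℝ) (hf : Measurable f) (hfpos : ∀ x, 0 < f x)
    (hdens : Measure.map (fun ω => (Z ω, W ω)) ℙ
      = volume.withDensity fun x => ENNReal.ofReal (f x))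
    (v r : ℝ) (hv : 0 < v) :
    ∀ A : Set (ℝ × ℝ), MeasurableSet A → A ⊆ Set.Ioi 0 ×ˢ Set.univ → 0 < volume A →
      0 < ℙ {ω | (Real.exp (α + β * Real.log v + W ω),
        a + b * r + c * Real.exp (α + β * Real.log v + W ω)
          + Real.exp (α + β * Real.log v + W ω) * Z ω) ∈ A} :=
  pos_prob_of_pos_leb_two_dim_general α a c β b Z W hZW f hf hfpos hdens v r
end

section
/- Let α, a, c, k, m, h, l be real constants, β ∈ (0,1), b ∈ (0,1), and let (U, Z, W) be a random vector in ℝ³ whose law has a Lebesgue density that is strictly positive everywhere on ℝ³. Fix (v, r, q) ∈ (0,∞) × ℝ × ℝ and set V₁ = exp(α + β ln v + W), R₁ = a + b r + c V₁ + V₁ Z, Q₁ = k r − m(R₁ − r) + h V₁ + l + V₁ U. Then for every Borel set A ⊆ (0,∞) × ℝ × ℝ of positive Lebesgue measure, P((V₁, R₁, Q₁) ∈ A) > 0. -/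
open MeasureTheory ProbabilityTheory

/-! The map `(U, Z, W) ↦ (V₁, R₁, Q₁)` is differentiable and maps `ℝ³` onto
`(0,∞) × ℝ × ℝ`: `W` is recovered as `log V₁ - α - β log v`, and then `Z` and `U` by solving
equations that are affine with slope `V₁ ≠ 0`. Differentiable maps send null sets to null sets,
so the preimage of a non-null `A` is non-null, and a law with an everywhere positive density
charges every non-null set. -/

theorem addHaar_preimage_pos_of_differentiable {E : Type*} [NormedAddCommGroup E]
    [NormedSpace ℝ E] [FiniteDimensional ℝ E] [MeasurableSpace E] [BorelSpace E]
    (μ : Measure E) [μ.IsAddHaarMeasure] {T : E → E} (hT : Differentiable ℝ T)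
    {A : Set E} (hA : A ⊆ Set.range T) (hμA : 0 < μ A) : 0 < μ (T ⁻¹' A) := by
  refine pos_iff_ne_zero.2 fun hnull => hμA.ne' ?_
  refine measure_mono_null (Set.image_preimage_eq_of_subset hA).superset ?_
  exact addHaar_image_eq_zero_of_differentiableOn_of_addHaar_eq_zero μ hT.differentiableOn hnull

theorem absolutelyContinuous_withDensity_ofReal {α : Type*} [MeasurableSpace α]
    (μ : Measure α) {f : α → ℝ} (hf : Measurable f) (hfpos : ∀ x, 0 < f x) :
    μ ≪ μ.withDensity fun x => ENNReal.ofReal (f x) :=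
  withDensity_absolutelyContinuous' hf.ennreal_ofReal.aemeasurable
    (Filter.Eventually.of_forall fun x => (ENNReal.ofReal_pos.2 (hfpos x)).ne')

/-- `(u, z, w) ↦ (V₁, R₁, Q₁)`, where `g` stands for `α + β log v`. -/
noncomputable def transitionMap (g a b c k m h l r : ℝ) (p : ℝ × ℝ × ℝ) : ℝ × ℝ × ℝ :=
  let V := Real.exp (g + p.2.2)
  let R := a + b * r + c * V + V * p.2.1
  (V, R, k * r - m * (R - r) + h * V + l + V * p.1)

section transitionMap

variable {g a b c k m h l r : ℝ}

theorem differentiable_transitionMap : Differentiable ℝ (transitionMap g a b c k m h l r) := by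
  unfold transitionMap
  fun_prop

theorem Ioi_prod_univ_subset_range_transitionMap :
    Set.Ioi 0 ×ˢ Set.univ ⊆ Set.range (transitionMap g a b c k m h l r) := by
  rintro ⟨x, y, w⟩ ⟨hx : 0 < x, -⟩
  refine ⟨((w - (k * r - m * (y - r) + h * x + l)) / x, (y - (a + b * r + c * x)) / x,
    Real.log x - g), ?_⟩
  simp only [transitionMap, add_sub_cancel, Real.exp_log hx, Prod.mk.injEq, true_and]
  field_simp
  constructor <;> ring

end transitionMap

theorem pos_prob_of_pos_leb_three_dim_general
    {Ω : Type*} [MeasureSpace Ω]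
    (α a c k m h l β b : ℝ)
    (U Z W : Ω → ℝ) (hUZW : Measurable fun ω => (U ω, Z ω, W ω))
    (f : ℝ × ℝ × ℝ → ℝ) (hf : Measurable f) (hfpos : ∀ x, 0 < f x)
    (hdens : Measure.map (fun ω => (U ω, Z ω, W ω)) ℙ
      = volume.withDensity fun x => ENNReal.ofReal (f x))
    (v r : ℝ) :
    ∀ A : Set (ℝ × ℝ × ℝ), MeasurableSet A →
      A ⊆ Set.Ioi 0 ×ˢ (Set.univ : Set (ℝ × ℝ)) → 0 < volume A →
      0 < ℙ {ω | (Real.exp (α + β * Real.log v + W ω),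
        a + b * r + c * Real.exp (α + β * Real.log v + W ω)
          + Real.exp (α + β * Real.log v + W ω) * Z ω,
        k * r - m * ((a + b * r + c * Real.exp (α + β * Real.log v + W ω)
            + Real.exp (α + β * Real.log v + W ω) * Z ω) - r)
          + h * Real.exp (α + β * Real.log v + W ω) + l
          + Real.exp (α + β * Real.log v + W ω) * U ω) ∈ A} := by
  intro A hA hAsub hApos
  set T := transitionMap (α + β * Real.log v) a b c k m h l r
  have hT : Differentiable ℝ T := differentiable_transitionMap
  -- instance search does not see through `volume` on `ℝ × ℝ × ℝ` to the product measure
  have : (volume : Measure (ℝ × ℝ × ℝ)).IsAddHaarMeasure :=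
    Measure.prod.instIsAddHaarMeasure _ _
  have hpre : 0 < volume (T ⁻¹' A) := addHaar_preimage_pos_of_differentiable _ hT
    (hAsub.trans (Ioi_prod_univ_subset_range_transitionMap)) hApos
  change 0 < ℙ ((fun ω => (U ω, Z ω, W ω)) ⁻¹' (T ⁻¹' A))
  rw [← Measure.map_apply hUZW (hT.continuous.measurable hA), hdens]
  exact (absolutelyContinuous_withDensity_ofReal volume hf hfpos).pos_mono hpre

/-- Let `α, a, c, k, m, h, l` be real constants, `β ∈ (0,1)`, `b ∈ (0,1)`, and let
`(U, Z, W)` be a random vector in `ℝ³` whose law has an everywhere strictly positive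
Lebesgue density. Fix `(v, r, q) ∈ (0,∞) × ℝ × ℝ` and set `V₁ = exp(α + β ln v + W)`,
`R₁ = a + b r + c V₁ + V₁ Z`, `Q₁ = k r − m(R₁ − r) + h V₁ + l + V₁ U`. Then every Borel set
`A ⊆ (0,∞) × ℝ × ℝ` of positive Lebesgue measure satisfies `P((V₁, R₁, Q₁) ∈ A) > 0`. -/
theorem pos_prob_of_pos_leb_three_dim
    {Ω : Type*} [MeasureSpace Ω] [IsProbabilityMeasure (ℙ : Measure Ω)]
    (α a c k m h l β b : ℝ) (hβ : β ∈ Set.Ioo (0 : ℝ) 1) (hb : b ∈ Set.Ioo (0 : ℝ) 1)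
    (U Z W : Ω → ℝ) (hUZW : Measurable fun ω => (U ω, Z ω, W ω))
    (f : ℝ × ℝ × ℝ → ℝ) (hf : Measurable f) (hfpos : ∀ x, 0 < f x)
    (hdens : Measure.map (fun ω => (U ω, Z ω, W ω)) ℙ
      = volume.withDensity fun x => ENNReal.ofReal (f x))
    (v r q : ℝ) (hv : 0 < v) :
    ∀ A : Set (ℝ × ℝ × ℝ), MeasurableSet A →
      A ⊆ Set.Ioi 0 ×ˢ (Set.univ : Set (ℝ × ℝ)) → 0 < volume A →
      0 < ℙ {ω | (Real.exp (α + β * Real.log v + W ω),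
        a + b * r + c * Real.exp (α + β * Real.log v + W ω)
          + Real.exp (α + β * Real.log v + W ω) * Z ω,
        k * r - m * ((a + b * r + c * Real.exp (α + β * Real.log v + W ω)
            + Real.exp (α + β * Real.log v + W ω) * Z ω) - r)
          + h * Real.exp (α + β * Real.log v + W ω) + l
          + Real.exp (α + β * Real.log v + W ω) * U ω) ∈ A} :=
  pos_prob_of_pos_leb_three_dim_general α a c k m h l β b U Z W hUZW f hf hfpos hdens v r
end

section
/- Let b ∈ (0,1) and let (B_t)_{t∈ℤ} be i.i.d. real random variables with E[max(0, ln|B_0|)] < ∞. Then for each t the series R_t = Σ_{k=0}^∞ b^k B_{t−k} converges almost surely, the process (R_t)_{t∈ℤ} is strictly stationary, and it satisfies the recursion R_t = b R_{t−1} + B_t for all t almost surely. -/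
open MeasureTheory ProbabilityTheory Filter

/-!
For any `c > 1`, integrability of `log⁺ |B 0|` and Borel–Cantelli give `|B (t - k)| ≤ c ^ k` for
all large `k` almost surely; taking `b c < 1`, the series defining `R t` is dominated by a
geometric series. Every window `(R (t + 1), …, R (t + n))` is one fixed measurable functional of
the shifted noise `j ↦ B (j + t)`, whose law is, whatever `t` is, the product over `ℤ` of
copies of the law of `B 0`.
The recursion is the series with its `k = 0` term split off.
-/

section LogMoment

variable {Ω : Type*} [MeasureSpace Ω] [IsProbabilityMeasure (ℙ : Measure Ω)]

lemma lt_div_log_of_pow_lt {c y : ℝ} (hc : 1 < c) {k : ℕ} (h : c ^ k < |y|) :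
    (k : ℝ) < max 0 (Real.log |y|) / Real.log c := by
  rw [lt_div_iff₀ (Real.log_pos hc)]
  calc (k : ℝ) * Real.log c = Real.log (c ^ k) := (Real.log_pow _ _).symm
    _ < Real.log |y| := Real.log_lt_log (by positivity) h
    _ ≤ max 0 (Real.log |y|) := le_max_right _ _

/-- Borel–Cantelli: `ℙ(|X k| > c ^ k) ≤ ℙ(log⁺ |Y| / log c > k)`, which is summable in `k`
because `log⁺ |Y|` is integrable. -/
lemma ae_eventually_abs_le_pow_of_integrable_log {X : ℕ → Ω → ℝ} {Y : Ω → ℝ} {c : ℝ}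
    (hc : 1 < c) (hX : ∀ k, IdentDistrib (X k) Y)
    (hlog : Integrable fun ω => max 0 (Real.log |Y ω|)) :
    ∀ᵐ ω, ∀ᶠ k in atTop, |X k ω| ≤ c ^ k := by
  have hmem : ∀ k : ℕ, ℙ {ω | c ^ k < |X k ω|} = ℙ {ω | c ^ k < |Y ω|} := fun k =>
    (hX k).measure_mem_eq (s := {y | c ^ k < |y|})
      (measurableSet_lt measurable_const measurable_abs)
  have hsum : ∑' k : ℕ, ℙ {ω | c ^ k < |X k ω|} ≠ ⊤ := by
    refine ne_top_of_le_ne_top (tsum_prob_mem_Ioi_lt_top (hlog.div_const (Real.log c))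
      fun ω => div_nonneg (le_max_left _ _) (Real.log_pos hc).le).ne ?_
    simp only [hmem]
    exact ENNReal.tsum_le_tsum fun k => measure_mono fun ω => lt_div_log_of_pow_lt hc
  filter_upwards [ae_eventually_notMem hsum] with ω hω
  simpa only [Set.mem_ofPred_eq, not_lt] using hω

lemma ae_summable_geometric_mul_of_integrable_log {X : ℕ → Ω → ℝ} {Y : Ω → ℝ} {b : ℝ}
    (hb : |b| < 1) (hX : ∀ k, IdentDistrib (X k) Y)
    (hlog : Integrable fun ω => max 0 (Real.log |Y ω|)) :
    ∀ᵐ ω, Summable fun k => b ^ k * X k ω := by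
  set c := 2 / (1 + |b|)
  have hc : 1 < c := by rw [lt_div_iff₀ (by positivity)]; linarith
  have hbc : |b| * c < 1 := by
    rw [mul_div_assoc', div_lt_one (by positivity)]; linarith
  filter_upwards [ae_eventually_abs_le_pow_of_integrable_log hc hX hlog] with ω hω
  refine Summable.of_norm_bounded_eventually_nat
    (summable_geometric_of_lt_one (by positivity) hbc) ?_
  filter_upwards [hω] with k hk
  rw [Real.norm_eq_abs, abs_mul, abs_pow, mul_pow]
  exact mul_le_mul_of_nonneg_left hk (by positivity)

end LogMoment

namespace ProbabilityTheory

variable {Ω ι κ E : Type*} [MeasurableSpace Ω] [MeasurableSpace E] {μ : Measure Ω}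
  {B : ι → Ω → E}

lemma iIndepFun.map_comp_eq_infinitePi (hmeas : ∀ i, Measurable (B i))
    (hindep : iIndepFun B μ) {ν : Measure E} [IsProbabilityMeasure ν]
    (hident : ∀ i, μ.map (B i) = ν) {σ : κ → ι} (hσ : σ.Injective) :
    μ.map (fun ω k => B (σ k) ω) = Measure.infinitePi fun _ : κ => ν := by
  rw [(hindep.precomp hσ).map_fun_eq_infinitePi_map fun k => hmeas (σ k)]
  simp only [hident]

lemma iIndepFun.map_comp_add_eq [AddGroup ι] {F : Type*} [MeasurableSpace F]
    [IsProbabilityMeasure μ]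
    (hmeas : ∀ i, Measurable (B i)) (hindep : iIndepFun B μ)
    (hident : ∀ i, μ.map (B i) = μ.map (B 0)) {G : (ι → E) → F} (hG : Measurable G) (t s : ι) :
    μ.map (fun ω => G fun j => B (j + t) ω) = μ.map (fun ω => G fun j => B (j + s) ω) := by
  have := Measure.isProbabilityMeasure_map (μ := μ) (hmeas 0).aemeasurable
  have hshift : ∀ u : ι, μ.map (fun ω => G fun j => B (j + u) ω) =
      (Measure.infinitePi fun _ : ι => μ.map (B 0)).map G := fun u => by
    rw [← hindep.map_comp_eq_infinitePi hmeas hident (add_left_injective u),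
      Measure.map_map hG (measurable_pi_lambda _ fun j => hmeas _)]
    rfl
  rw [hshift, hshift]

end ProbabilityTheory

lemma tsum_geometric_mul_eq_mul_add {b : ℝ} {x : ℤ → ℝ} {t : ℤ}
    (h : Summable fun k : ℕ => b ^ k * x (t - k)) :
    ∑' k : ℕ, b ^ k * x (t - k) = b * ∑' k : ℕ, b ^ k * x (t - 1 - k) + x t := by
  rw [h.tsum_eq_zero_add, ← tsum_mul_left]
  simp only [pow_zero, one_mul, Nat.cast_zero, sub_zero, Nat.cast_succ, pow_succ]
  rw [add_comm]
  congr 1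
  refine tsum_congr fun k => ?_
  rw [sub_add_eq_sub_sub_swap]
  ring

/-- Let `b ∈ (0,1)` and let `(B_t)_{t ∈ ℤ}` be i.i.d. real random variables with
`E[max(0, ln|B_0|)] < ∞`. Then for each `t` the series `R_t = Σ_{k=0}^∞ b^k B_{t−k}`
converges almost surely, the process `(R_t)_{t ∈ ℤ}` is strictly stationary (the law of
`(R_{t+1}, …, R_{t+n})` does not depend on `t`), and it satisfies the recursion
`R_t = b R_{t−1} + B_t` for all `t` almost surely. -/
theorem stationary_AR1_from_iid
    {Ω : Type*} [MeasureSpace Ω] [IsProbabilityMeasure (ℙ : Measure Ω)]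
    (b : ℝ) (hb : b ∈ Set.Ioo (0 : ℝ) 1)
    (B : ℤ → Ω → ℝ) (hmeas : ∀ t, Measurable (B t))
    (hindep : iIndepFun B ℙ)
    (hident : ∀ t, Measure.map (B t) ℙ = Measure.map (B 0) ℙ)
    (hlog : Integrable (fun ω => max 0 (Real.log |B 0 ω|)) ℙ) :
    (∀ t : ℤ, ∀ᵐ ω ∂ℙ, Summable fun k : ℕ => b ^ k * B (t - (k : ℤ)) ω) ∧
    (∀ n : ℕ, ∀ t s : ℤ,
      Measure.map (fun ω => fun i : Fin n =>
        ∑' k : ℕ, b ^ k * B (t + 1 + (i : ℤ) - (k : ℤ)) ω) ℙ =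
      Measure.map (fun ω => fun i : Fin n =>
        ∑' k : ℕ, b ^ k * B (s + 1 + (i : ℤ) - (k : ℤ)) ω) ℙ) ∧
    (∀ t : ℤ, ∀ᵐ ω ∂ℙ,
      (∑' k : ℕ, b ^ k * B (t - (k : ℤ)) ω)
        = b * (∑' k : ℕ, b ^ k * B (t - 1 - (k : ℤ)) ω) + B t ω) := by
  have hsum (t : ℤ) : ∀ᵐ ω ∂ℙ, Summable fun k : ℕ => b ^ k * B (t - k) ω :=
    ae_summable_geometric_mul_of_integrable_log (by rw [abs_of_pos hb.1]; exact hb.2)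
      (fun k => ⟨(hmeas _).aemeasurable, (hmeas 0).aemeasurable, hident _⟩) hlog
  refine ⟨hsum, fun n t s => ?_,
    fun t => (hsum t).mono fun ω h => tsum_geometric_mul_eq_mul_add (x := fun j => B j ω) h⟩
  have hwindow (u : ℤ) : (fun ω (i : Fin n) => ∑' k : ℕ, b ^ k * B (u + 1 + i - k) ω) =
      fun ω => (fun (y : ℤ → ℝ) (i : Fin n) => ∑' k : ℕ, b ^ k * y (1 + i - k))
        fun j => B (j + u) ω := by
    funext ω i
    refine tsum_congr fun k => ?_
    rw [show u + 1 + (i : ℤ) - k = 1 + i - k + u by ring]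
  rw [hwindow, hwindow]
  exact hindep.map_comp_add_eq hmeas hident (measurable_pi_lambda _ fun i =>
    Measurable.tsum fun k => (measurable_pi_apply _).const_mul _) t s
end

section
/- Let α be a real constant, β ∈ (0,1), b ∈ (0,1), and let (Z_t, W_t), t ∈ ℤ, be i.i.d. mean-zero random vectors in ℝ² with Z_1 integrable and E[e^{u W_1}] < ∞ for some u ∈ (0,1). Define the strictly stationary volatility process V_t = exp(α/(1−β) + Σ_{k=0}^∞ β^k W_{t−k}) and set B_t := a + c V_t + V_t Z_t for real constants a, c. Then E[max(0, ln|B_t|)] < ∞. -/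
/-!
Since `V_t > 0`, `|B_t| ≤ |a| + V_t (|c| + |Z_t|)`, and the subadditivity of `log⁺` gives
`log⁺ |B_t| ≤ log 2 + log⁺ |a| + |c| + |α / (1 - β)| + |Z_t| + (∑ β^k W_{t-k})⁺`.
The positive part of the series is at most `∑ β^k W_{t-k}⁺`, whose expectation is
`E[W₁⁺] / (1 - β)` by identical distribution, and `E[W₁⁺] ≤ E[e^{u W₁}] / u` because
`u x ≤ e^{u x}`.
-/

open MeasureTheory ProbabilityTheory Real
open scoped ENNReal

theorem ENNReal.ofReal_tsum_le_tsum_ofReal {ι : Type*} (f : ι → ℝ) :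
    ENNReal.ofReal (∑' i, f i) ≤ ∑' i, ENNReal.ofReal (f i) := by
  by_cases hf : Summable f
  · have hpos : Summable fun i => max (f i) 0 :=
      hf.abs.of_nonneg_of_le (fun _ => le_max_right _ _)
        (fun i => max_le (le_abs_self _) (abs_nonneg _))
    calc ENNReal.ofReal (∑' i, f i) ≤ ENNReal.ofReal (∑' i, max (f i) 0) :=
          ENNReal.ofReal_le_ofReal (hf.tsum_le_tsum (fun i => le_max_left _ _) hpos)
      _ = ∑' i, ENNReal.ofReal (max (f i) 0) :=
          ENNReal.ofReal_tsum_of_nonneg (fun _ => le_max_right _ _) hpos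
      _ = ∑' i, ENNReal.ofReal (f i) := by simp
  · simp [tsum_eq_zero_of_not_summable hf]

theorem Real.posLog_abs_add_mul_exp_le (a c m s z : ℝ) :
    log⁺ |a + c * exp (m + s) + exp (m + s) * z|
      ≤ log 2 + log⁺ |a| + |c| + |m| + |z| + max s 0 := by
  set V := exp (m + s)
  have hV : 0 < V := exp_pos _
  have hsum : |a + c * V + V * z| ≤ |a| + V * (|c| + |z|) := by
    calc |a + c * V + V * z| ≤ |a| + |c * V| + |V * z| := abs_add_three _ _ _
      _ = |a| + V * (|c| + |z|) := by rw [abs_mul, abs_mul, abs_of_pos hV]; ring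
  have hlogV : log⁺ V ≤ |m| + max s 0 := by
    rw [posLog_apply, log_exp]
    exact max_le (by positivity) (add_le_add (le_abs_self m) (le_max_left s 0))
  have hlin : log⁺ (|c| + |z|) ≤ |c| + |z| :=
    max_le (by positivity) (log_le_self (by positivity))
  calc log⁺ |a + c * V + V * z| ≤ log⁺ (|a| + V * (|c| + |z|)) :=
        posLog_le_posLog (abs_nonneg _) hsum
    _ ≤ log 2 + log⁺ |a| + log⁺ (V * (|c| + |z|)) := posLog_add
    _ ≤ log 2 + log⁺ |a| + (log⁺ V + log⁺ (|c| + |z|)) := by gcongr; exact posLog_mul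
    _ ≤ log 2 + log⁺ |a| + |c| + |m| + |z| + max s 0 := by linarith

section

variable {Ω : Type*} [MeasurableSpace Ω] {μ : Measure Ω}

theorem lintegral_ofReal_le_inv_mul_lintegral_exp_mul {X : Ω → ℝ} {u : ℝ} (hu : 0 < u) :
    ∫⁻ ω, ENNReal.ofReal (X ω) ∂μ
      ≤ ENNReal.ofReal u⁻¹ * ∫⁻ ω, ENNReal.ofReal (exp (u * X ω)) ∂μ := by
  rw [← lintegral_const_mul' _ _ ENNReal.ofReal_ne_top]
  refine lintegral_mono fun ω => ?_
  rw [← ENNReal.ofReal_mul (inv_nonneg.2 hu.le)]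
  refine ENNReal.ofReal_le_ofReal ((le_inv_mul_iff₀ hu).2 ?_)
  linarith [add_one_le_exp (u * X ω)]

theorem lintegral_ofReal_tsum_pow_mul_le {X : ℕ → Ω → ℝ} {β : ℝ} {M : ℝ≥0∞}
    (hβ0 : 0 ≤ β) (hβ1 : β < 1) (hX : ∀ k, AEMeasurable (X k) μ)
    (hM : ∀ k, ∫⁻ ω, ENNReal.ofReal (X k ω) ∂μ ≤ M) :
    ∫⁻ ω, ENNReal.ofReal (∑' k, β ^ k * X k ω) ∂μ ≤ ENNReal.ofReal (1 - β)⁻¹ * M := by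
  have hgeom := summable_geometric_of_lt_one hβ0 hβ1
  calc ∫⁻ ω, ENNReal.ofReal (∑' k, β ^ k * X k ω) ∂μ
      ≤ ∫⁻ ω, ∑' k, ENNReal.ofReal (β ^ k) * ENNReal.ofReal (X k ω) ∂μ :=
        lintegral_mono fun ω => (ENNReal.ofReal_tsum_le_tsum_ofReal _).trans_eq
          (tsum_congr fun k => ENNReal.ofReal_mul (by positivity))
    _ = ∑' k, ENNReal.ofReal (β ^ k) * ∫⁻ ω, ENNReal.ofReal (X k ω) ∂μ := by
        rw [lintegral_tsum fun k => (hX k).ennreal_ofReal.const_mul _]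
        exact tsum_congr fun k => lintegral_const_mul' _ _ ENNReal.ofReal_ne_top
    _ ≤ ∑' k, ENNReal.ofReal (β ^ k) * M :=
        ENNReal.tsum_le_tsum fun k => mul_le_mul_right (hM k) _
    _ = ENNReal.ofReal (1 - β)⁻¹ * M := by
        rw [ENNReal.tsum_mul_right, ← ENNReal.ofReal_tsum_of_nonneg (fun k => by positivity) hgeom,
          tsum_geometric_of_lt_one hβ0 hβ1]

theorem integrable_max_zero_of_lintegral_ofReal_lt_top {f : Ω → ℝ} (hf : AEStronglyMeasurable f μ)
    (hlt : ∫⁻ ω, ENNReal.ofReal (f ω) ∂μ < ⊤) : Integrable (fun ω => max (f ω) 0) μ := by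
  refine ⟨hf.sup aestronglyMeasurable_const, ?_⟩
  rw [hasFiniteIntegral_iff_ofReal (f := fun ω => max (f ω) 0)
    (ae_of_all _ fun _ => le_max_right _ _)]
  simpa using hlt

end

theorem integrable_pos_log_stationary_AR_noise_general
    {Ω : Type*} [MeasureSpace Ω] [IsProbabilityMeasure (ℙ : Measure Ω)]
    (α a c β u : ℝ) (hβ : β ∈ Set.Ioo (0 : ℝ) 1)
    (hu : u ∈ Set.Ioo (0 : ℝ) 1)
    (ζ : ℤ → Ω → ℝ × ℝ) (hmeas : ∀ t, Measurable (ζ t))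
    (hident : ∀ t, Measure.map (ζ t) ℙ = Measure.map (ζ 1) ℙ)
    (hZint : Integrable (fun ω => (ζ 1 ω).1) ℙ)
    (hmgf : Integrable (fun ω => Real.exp (u * (ζ 1 ω).2)) ℙ) :
    ∀ t : ℤ, Integrable (fun ω => max 0 (Real.log
      |a + c * Real.exp (α / (1 - β) + ∑' k : ℕ, β ^ k * (ζ (t - (k : ℤ)) ω).2)
        + Real.exp (α / (1 - β) + ∑' k : ℕ, β ^ k * (ζ (t - (k : ℤ)) ω).2)
          * (ζ t ω).1|)) ℙ := by
  intro t
  have hdist (s : ℤ) : IdentDistrib (ζ s) (ζ 1) ℙ ℙ :=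
    ⟨(hmeas s).aemeasurable, (hmeas 1).aemeasurable, hident s⟩
  have hW (s : ℤ) : ∫⁻ ω, ENNReal.ofReal (ζ s ω).2 = ∫⁻ ω, ENNReal.ofReal (ζ 1 ω).2 :=
    ((hdist s).comp measurable_snd.ennreal_ofReal).lintegral_eq
  have hW_lt : ∫⁻ ω, ENNReal.ofReal (ζ 1 ω).2 < ⊤ :=
    (lintegral_ofReal_le_inv_mul_lintegral_exp_mul hu.1).trans_lt
      (ENNReal.mul_lt_top ENNReal.ofReal_lt_top hmgf.lintegral_lt_top)
  set S : Ω → ℝ := fun ω => ∑' k : ℕ, β ^ k * (ζ (t - (k : ℤ)) ω).2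
  have hS_meas : Measurable S :=
    Measurable.tsum fun k => (measurable_snd.comp (hmeas _)).const_mul _
  have hS_lt : ∫⁻ ω, ENNReal.ofReal (S ω) < ⊤ :=
    (lintegral_ofReal_tsum_pow_mul_le hβ.1.le hβ.2
      (fun k => (measurable_snd.comp (hmeas _)).aemeasurable) (fun k => (hW _).le)).trans_lt
      (ENNReal.mul_lt_top ENNReal.ofReal_lt_top hW_lt)
  have hZ : Integrable (fun ω => (ζ t ω).1) ℙ :=
    ((hdist t).comp measurable_fst).integrable_iff.2 hZint
  have hdom := (((integrable_const (log 2 + log⁺ |a| + |c| + |α / (1 - β)|)).add hZ.abs).add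
    (integrable_max_zero_of_lintegral_ofReal_lt_top hS_meas.aestronglyMeasurable hS_lt))
  refine hdom.mono' (Measurable.aestronglyMeasurable (by fun_prop)) (ae_of_all _ fun ω => ?_)
  rw [Real.norm_of_nonneg (le_max_left _ _)]
  exact posLog_abs_add_mul_exp_le a c _ (S ω) _

/-- Let `α` be real, `β ∈ (0,1)`, `b ∈ (0,1)`, and `(Z_t, W_t)`, `t ∈ ℤ`, i.i.d. mean-zero
random vectors in `ℝ²` with `Z₁` integrable and `E[e^{u W₁}] < ∞` for some `u ∈ (0,1)`.
Define the strictly stationary volatility process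
`V_t = exp(α/(1−β) + Σ_{k=0}^∞ β^k W_{t−k})` and set `B_t := a + c V_t + V_t Z_t` for real
constants `a, c`. Then `E[max(0, ln|B_t|)] < ∞`. -/
theorem integrable_pos_log_stationary_AR_noise
    {Ω : Type*} [MeasureSpace Ω] [IsProbabilityMeasure (ℙ : Measure Ω)]
    (α a c β b u : ℝ) (hβ : β ∈ Set.Ioo (0 : ℝ) 1) (hb : b ∈ Set.Ioo (0 : ℝ) 1)
    (hu : u ∈ Set.Ioo (0 : ℝ) 1)
    (ζ : ℤ → Ω → ℝ × ℝ) (hmeas : ∀ t, Measurable (ζ t))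
    (hindep : iIndepFun ζ ℙ)
    (hident : ∀ t, Measure.map (ζ t) ℙ = Measure.map (ζ 1) ℙ)
    (hmeanZ : (∫ ω, (ζ 1 ω).1 ∂ℙ) = 0) (hmeanW : (∫ ω, (ζ 1 ω).2 ∂ℙ) = 0)
    (hZint : Integrable (fun ω => (ζ 1 ω).1) ℙ)
    (hmgf : Integrable (fun ω => Real.exp (u * (ζ 1 ω).2)) ℙ) :
    ∀ t : ℤ, Integrable (fun ω => max 0 (Real.log
      |a + c * Real.exp (α / (1 - β) + ∑' k : ℕ, β ^ k * (ζ (t - (k : ℤ)) ω).2)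
        + Real.exp (α / (1 - β) + ∑' k : ℕ, β ^ k * (ζ (t - (k : ℤ)) ω).2)
          * (ζ t ω).1|)) ℙ :=
  integrable_pos_log_stationary_AR_noise_general α a c β u hβ hu ζ hmeas hident hZint hmgf
end
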